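/- Let f be an expansive homeomorphism with the periodic gluing orbit property of a compact metric space and h a commuting homeomorphism preserving the periodic orbits of f, with h(p) = f^{n(p)}(p) for each periodic p where n(p) ∈ ℤ ∩ (−π(p)/2, π(p)/2]. If the function n(·) is bounded on the set of periodic points, then h = f^k for some integer k. -/

import Mathlib

/-!
Glue long segments of finitely many periodic orbits into one periodic orbit `z`. Since `h` is
uniformly continuous and commutes with `f`, it moves the shadowed points as it moves `z`, and by
expansivity `h = f ^ n(z)` on all of them. As `n(z)` takes at most `2N + 1` values, one exponent
`k` works for every periodic point (otherwise glue one counterexample per candidate), and density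
of periodic points gives `h = f ^ k` everywhere.
-/

open Function Set Filter Topology Metric

variable {X : Type*} [MetricSpace X] [CompactSpace X]

/-- The `n`-th iterate (`n ∈ ℤ`) of a homeomorphism `f`. -/
def zpowIter (f : X ≃ₜ X) (n : ℤ) : X → X := ⇑(f.toEquiv ^ n : Equiv.Perm X)

/-- `x` is a periodic point of `f`. -/
def IsPer (f : X ≃ₜ X) (x : X) : Prop := ∃ n : ℕ, 0 < n ∧ (⇑f)^[n] x = x

/-- The full (two-sided) orbit of `x` under `f`. -/
def zOrbit (f : X ≃ₜ X) (x : X) : Set X := {y | ∃ n : ℤ, zpowIter f n x = y}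

/-- `f` is expansive: some `ε > 0` separates any two distinct orbits. -/
def Expansive (f : X ≃ₜ X) : Prop :=
  ∃ e : ℝ, 0 < e ∧ ∀ x y : X, x ≠ y → ∃ n : ℤ, e < dist (zpowIter f n x) (zpowIter f n y)

/-- The periodic gluing orbit property: any finite collection of orbit segments can be
`ε`-shadowed by a single periodic orbit, with gap times bounded by `K(ε)`. -/
def PeriodicGluing (f : X ≃ₜ X) : Prop :=
  ∀ e : ℝ, 0 < e → ∃ K : ℕ, 0 < K ∧
    ∀ (k : ℕ) (x : ℕ → X) (n : ℕ → ℕ), (∀ i, i ≤ k → 1 ≤ n i) →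
      ∃ (p : ℕ → ℕ) (z : X),
        (∀ i, i ≤ k → 1 ≤ p i ∧ p i ≤ K) ∧
        (∀ i, i ≤ k → ∀ j, j ≤ n i →
          dist ((⇑f)^[j + ∑ l ∈ Finset.range i, (n l + p l)] z) ((⇑f)^[j] (x i)) < e) ∧
        (⇑f)^[∑ l ∈ Finset.range (k + 1), (n l + p l)] z = z

section zpowIter

variable {α : Type*} [MetricSpace α] (f : α ≃ₜ α)

lemma zpowIter_eq_coe_zpow (k : ℤ) : zpowIter f k = ⇑(f ^ k) := by
  let toPerm : (α ≃ₜ α) →* Equiv.Perm α :=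
    { toFun := Homeomorph.toEquiv, map_one' := rfl, map_mul' := fun _ _ => rfl }
  change ⇑(toPerm f ^ k) = ⇑(toPerm (f ^ k))
  rw [map_zpow]

lemma continuous_zpowIter (k : ℤ) : Continuous (zpowIter f k) := by
  rw [zpowIter_eq_coe_zpow]; exact (f ^ k).continuous

lemma zpowIter_add (a b : ℤ) (x : α) : zpowIter f (a + b) x = zpowIter f a (zpowIter f b x) := by
  simp [zpowIter, zpow_add]

lemma zpowIter_natCast (m : ℕ) : zpowIter f m = (⇑f)^[m] := by
  simp only [zpowIter, zpow_natCast, Equiv.Perm.coe_pow]; rfl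

lemma iterate_zpowIter (m : ℕ) (b : ℤ) (x : α) :
    (⇑f)^[m] (zpowIter f b x) = zpowIter f (m + b) x := by
  rw [zpowIter_add, zpowIter_natCast]

lemma commute_zpowIter (k : ℤ) : Function.Commute (zpowIter f k) f := fun x => by
  rw [← iterate_one f, ← zpowIter_natCast, ← zpowIter_add, ← zpowIter_add, add_comm]

lemma zpowIter_eq_iterate_emod {P : ℕ} (hP : 0 < P) {x : α} (hx : IsPeriodicPt f P x) (k : ℤ) :
    zpowIter f k x = (⇑f)^[(k % P).toNat] x := by
  have hfix : zpowIter f (P * (k / P)) x = x := by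
    rw [zpowIter, zpow_mul]
    apply Equiv.Perm.zpow_apply_eq_self_of_apply_eq_self
    rw [zpow_natCast, Equiv.Perm.coe_pow]; exact hx
  calc zpowIter f k x = zpowIter f (k % P + P * (k / P)) x := by rw [Int.emod_add_mul_ediv]
    _ = zpowIter f (k % P) x := by rw [zpowIter_add, hfix]
    _ = _ := by rw [← zpowIter_natCast, Int.toNat_of_nonneg (Int.emod_nonneg k (by omega))]

end zpowIter

def ExpansiveWith {α : Type*} [MetricSpace α] (f : α ≃ₜ α) (e : ℝ) : Prop :=
  ∀ x y : α, x ≠ y → ∃ n : ℤ, e < dist (zpowIter f n x) (zpowIter f n y)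

section Dynamics

variable {α : Type*} [MetricSpace α] {f : α ≃ₜ α}

lemma PeriodicGluing.dense_isPer (hglue : PeriodicGluing f) : Dense {x | IsPer f x} := by
  refine Metric.dense_iff.mpr fun x r hr => ?_
  obtain ⟨K, -, hK⟩ := hglue r hr
  obtain ⟨p, z, -, hshadow, hz⟩ := hK 0 (fun _ => x) (fun _ => 1) (fun _ _ => le_rfl)
  exact ⟨z, by simpa using hshadow 0 le_rfl 0 (Nat.zero_le _), 1 + p 0, by omega, by simpa using hz⟩

lemma ExpansiveWith.eq_of_isPeriodicPt {e : ℝ} (hexp : ExpansiveWith f e) {P : ℕ} (hP : 0 < P)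
    {x y : α} (hx : IsPeriodicPt f P x) (hy : IsPeriodicPt f P y)
    (hclose : ∀ r < P, dist ((⇑f)^[r] x) ((⇑f)^[r] y) ≤ e) : x = y := by
  by_contra hne
  obtain ⟨k, hk⟩ := hexp x y hne
  rw [zpowIter_eq_iterate_emod f hP hx, zpowIter_eq_iterate_emod f hP hy] at hk
  have hlt := Int.emod_lt_of_pos k (b := P) (by omega)
  exact (hclose _ (by omega)).not_gt hk

/-- For `r < π`, both `f^[r + N] (f ^ b q)` and `h (f^[r + N] q)` are close to the shadowing
orbit of `z`, so `f ^ b q` and `h q` are `e`-close along a full period after `N` steps. -/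
lemma ExpansiveWith.apply_eq_zpowIter_of_shadowing {h : α ≃ₜ α} {e δ : ℝ}
    (hexp : ExpansiveWith f e) (hcomm : Function.Commute h f)
    (hδ : ∀ x y, dist x y < δ → dist (h x) (h y) < e / 2) (hδe : δ ≤ e / 2)
    {q z : α} {π N o : ℕ} {b : ℤ} (hπ : 0 < π) (hq : IsPeriodicPt f π q)
    (hz : h z = zpowIter f b z) (hb : |b| ≤ N)
    (hshadow : ∀ j ≤ π + 2 * N, dist ((⇑f)^[j + o] z) ((⇑f)^[j] q) < δ) :
    h q = zpowIter f b q := by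
  refine (f.injective.iterate N (hexp.eq_of_isPeriodicPt hπ
    ((hq.map (commute_zpowIter f b)).apply_iterate N) ((hq.map hcomm).apply_iterate N)
    fun r hr => ?_)).symm
  obtain ⟨hb₁, hb₂⟩ := abs_le.mp hb
  set m := r + N
  obtain ⟨j, hj⟩ : ∃ j : ℕ, (j : ℤ) = m + b := ⟨(m + b).toNat, Int.toNat_of_nonneg (by omega)⟩
  have hA : (⇑f)^[m] (zpowIter f b q) = (⇑f)^[j] q := by
    rw [iterate_zpowIter, ← hj, zpowIter_natCast]
  have hB : (⇑f)^[j + o] z = h ((⇑f)^[m + o] z) := by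
    rw [(hcomm.iterate_right _).eq, hz, iterate_zpowIter, ← zpowIter_natCast]
    congr 1; push_cast; omega
  rw [← iterate_add_apply, ← iterate_add_apply, hA, ← (hcomm.iterate_right m).eq]
  calc dist ((⇑f)^[j] q) (h ((⇑f)^[m] q))
      ≤ dist ((⇑f)^[j] q) (h ((⇑f)^[m + o] z)) + dist (h ((⇑f)^[m + o] z)) (h ((⇑f)^[m] q)) :=
        dist_triangle _ _ _
    _ ≤ δ + e / 2 := by
        refine add_le_add ?_ (hδ _ _ (hshadow m (by omega))).le
        rw [← hB, dist_comm]
        exact (hshadow j (by omega)).le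
    _ ≤ e := by linarith

end Dynamics

/-- Otherwise a counterexample in `S` for each of the `2N + 1` candidates forms a bad family. -/
lemma exists_forall_mem_of_forall_family {β : Type*} {S : Set β} (good : ℤ → β → Prop) (N : ℕ)
    (H : ∀ x : ℕ → β, (∀ i, x i ∈ S) → ∃ k : ℤ, |k| ≤ N ∧ ∀ i ≤ 2 * N, good k (x i)) :
    ∃ k : ℤ, ∀ a ∈ S, good k a := by
  by_contra! hbad
  choose w hwS hw using hbad
  obtain ⟨k, hk, hgood⟩ := H (fun i => w (i - N)) (fun i => hwS _)
  obtain ⟨hk₁, hk₂⟩ := abs_le.mp hk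
  have hi : ((k + N).toNat : ℤ) - N = k := by omega
  exact hw k (by simpa only [hi] using hgood (k + N).toNat (by omega))

lemma exists_zpowIter_eq_on_family {f h : X ≃ₜ X} {e : ℝ} (he : 0 < e) (hexp : ExpansiveWith f e)
    (hglue : PeriodicGluing f) (hcomm : Function.Commute h f) {N : ℕ}
    (hdisp : ∀ p, IsPer f p → ∃ k : ℤ, |k| ≤ N ∧ h p = zpowIter f k p)
    (m : ℕ) (x : ℕ → X) (hx : ∀ i, IsPer f (x i)) :
    ∃ k : ℤ, |k| ≤ N ∧ ∀ i ≤ m, h (x i) = zpowIter f k (x i) := by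
  obtain ⟨δ, hδ, hδh⟩ := Metric.uniformContinuous_iff.mp
    (CompactSpace.uniformContinuous_of_continuous h.continuous) (e / 2) (by positivity)
  obtain ⟨K, -, hK⟩ := hglue (min δ (e / 2)) (by positivity)
  have hπ (i : ℕ) : 0 < minimalPeriod f (x i) := minimalPeriod_pos_of_mem_periodicPts (hx i)
  obtain ⟨p, z, -, hshadow, hz⟩ := hK m x (fun i => minimalPeriod f (x i) + 2 * N)
    fun i _ => by have := hπ i; omega
  have hzper : IsPer f z :=
    ⟨_, Finset.sum_pos (fun l _ => by have := hπ l; omega) ⟨0, by simp⟩, hz⟩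
  obtain ⟨k, hkN, hzk⟩ := hdisp z hzper
  exact ⟨k, hkN, fun i hi => hexp.apply_eq_zpowIter_of_shadowing hcomm
    (fun _ _ hxy => hδh (hxy.trans_le (min_le_left _ _))) (min_le_right _ _) (hπ i)
    (isPeriodicPt_minimalPeriod f (x i)) hzk hkN (hshadow i hi)⟩

/-- If the displacement function `n(·)` (with `h p = f^{n p} p` and
`n p ∈ (-π(p)/2, π(p)/2]` on periodic points) is bounded, then `h` is a power of `f`. -/
theorem bounded_displacement_implies_power
    (f h : X ≃ₜ X) (hexp : Expansive f) (hglue : PeriodicGluing f)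
    (hcomm : ⇑h ∘ ⇑f = ⇑f ∘ ⇑h) (n : X → ℤ)
    (hn : ∀ p : X, IsPer f p → h p = zpowIter f (n p) p ∧
      -(Function.minimalPeriod ⇑f p : ℤ) < 2 * n p ∧
        2 * n p ≤ (Function.minimalPeriod ⇑f p : ℤ))
    (hbd : ∃ N : ℕ, ∀ p : X, IsPer f p → |n p| ≤ (N : ℤ)) :
    ∃ k : ℤ, ⇑h = zpowIter f k := by
  obtain ⟨e, he, hexp⟩ := hexp
  obtain ⟨N, hN⟩ := hbd
  have hdisp (p : X) (hp : IsPer f p) : ∃ k : ℤ, |k| ≤ N ∧ h p = zpowIter f k p :=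
    ⟨n p, hN p hp, (hn p hp).1⟩
  obtain ⟨k, hk⟩ := exists_forall_mem_of_forall_family (S := {p | IsPer f p})
    (fun k p => h p = zpowIter f k p) N fun x hx =>
      exists_zpowIter_eq_on_family he hexp hglue (congrFun hcomm) hdisp (2 * N) x hx
  exact ⟨k, Continuous.ext_on hglue.dense_isPer h.continuous (continuous_zpowIter f k) hk⟩
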